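/- If M is FTA-compliant with a non-conflating interpreted architecture ((D,↝), (A, dom, 𝕀)), then for all domains u ∈ D and all α, α' ∈ A* such that tf_u(α) = tf_u(α'), we have view_u(α) = view_u(α'). -/

import Mathlib

structure Machine (S A D O : Type) where
  s0 : S
  step : S → A → S
  dom : A → D
  obs : D → S → O

namespace Machine

def run {S A D O : Type} (M : Machine S A D O) (α : List A) : S :=
  α.foldl M.step M.s0

end Machine
/-- Elements of a view: actions or (group) observations. -/
inductive VE (A O' : Type) where
  | act : A → VE A O'
  | obs : O' → VE A O'

open Classical in
/-- Absorptive concatenation: `σ ∘ x` is `σ` if `x` equals the last element of `σ`,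
and `σ ++ [x]` otherwise. -/
noncomputable def absorb {X : Type} (σ : List X) (x : X) : List X :=
  if σ.getLast? = some x then σ else σ ++ [x]

open Classical in
/-- View of a group `G`, computed on the reversed action sequence. -/
noncomputable def viewR {S A D O : Type} (M : Machine S A D O) (G : Set D) :
    List A → List (VE A (G → O))
  | [] => [VE.obs (fun u : G => M.obs u.1 M.s0)]
  | a :: ρ =>
    let o : VE A (G → O) := VE.obs (fun u : G => M.obs u.1 (M.run ((a :: ρ).reverse)))
    if M.dom a ∈ G then viewR M G ρ ++ [VE.act a, o] else absorb (viewR M G ρ) o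

/-- The view of group `G` of the action sequence `α`. -/
noncomputable def view {S A D O : Type} (M : Machine S A D O) (G : Set D) (α : List A) :
    List (VE A (G → O)) :=
  viewR M G α.reverse
/-- An extended architecture: `edge u v = none` means no edge, `edge u v = some none`
means an edge labelled `⊤`, and `edge u v = some (some f)` means an edge labelled by
the filter-function name `f`.  There is at most one label per ordered pair by
construction, and the relation is reflexive with label `⊤`. -/
structure ExtArch (D L : Type) where
  edge : D → D → Option (Option L)
  refl : ∀ u, edge u u = some none

/-- Values of the `tf` function and of filter-function interpretations:
`eps` is the empty value ε, `base v` an arbitrary basic value, and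
`pair σ a` the pair `(σ, a)` of a `tf` value and an action. -/
inductive TFVal (A V : Type) where
  | eps : TFVal A V
  | base : V → TFVal A V
  | pair : List (TFVal A V) → A → TFVal A V

/-- `σ ⌢ x`: appends `x` as a single new last element unless `x = ε`. -/
def snoc' {A V : Type} (σ : List (TFVal A V)) : TFVal A V → List (TFVal A V)
  | .eps => σ
  | x => σ ++ [x]

/-- `tf`, computed on the reversed action sequence. -/
def tfR {A D L V : Type} (Arch : ExtArch D L) (dm : A → D)
    (I : L → List A → A → TFVal A V) : List A → D → List (TFVal A V)
  | [], _ => []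
  | a :: ρ, u =>
    match Arch.edge (dm a) u with
    | none => tfR Arch dm I ρ u
    | some none => tfR Arch dm I ρ u ++ [TFVal.pair (tfR Arch dm I ρ (dm a)) a]
    | some (some f) => snoc' (tfR Arch dm I ρ u) (I f ρ.reverse a)

/-- `tf Arch dm I α u` : maximal information domain `u` is permitted to have after `α`. -/
def tf {A D L V : Type} (Arch : ExtArch D L) (dm : A → D)
    (I : L → List A → A → TFVal A V) (α : List A) (u : D) : List (TFVal A V) :=
  tfR Arch dm I α.reverse u

/-- `inF Arch dm I α a u` : the information `in_{dom(a),u}(α, a)` transmitted to `u`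
when action `a` is performed after `α`. -/
def inF {A D L V : Type} (Arch : ExtArch D L) (dm : A → D)
    (I : L → List A → A → TFVal A V) (α : List A) (a : A) (u : D) : TFVal A V :=
  match Arch.edge (dm a) u with
  | none => TFVal.eps
  | some none => TFVal.pair (tf Arch dm I α (dm a)) a
  | some (some f) => I f α a
/-- FTA-compliance of a machine with an interpreted extended architecture
(whose actions, domains and domain function are those of the machine). -/
def FTACompliant {S A D O L V : Type} (M : Machine S A D O) (Arch : ExtArch D L)
    (I : L → List A → A → TFVal A V) : Prop :=
  ∀ (u : D) (α α' : List A), tf Arch M.dom I α u = tf Arch M.dom I α' u →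
    M.obs u (M.run α) = M.obs u (M.run α')
/-- A non-conflating interpreted architecture. -/
def NonConflating {A D L V : Type} (Arch : ExtArch D L) (dm : A → D)
    (I : L → List A → A → TFVal A V) : Prop :=
  ∀ (u v : D) (f : L), Arch.edge u v = some (some f) →
    ∀ (a b : A), dm a = u → dm b = v →
      ∀ (α β : List A), I f α a ≠ TFVal.pair (tf Arch dm I β v) b

/-
The view of `u` can be read off `tf_u` alone. Each observation in the view is a function of the
current `tf_u` value, by FTA-compliance. Whether a step was performed by `u` itself is visible in
the entry it appends to `tf_u`: an own action `a` appends `(tf_u(α), a)`, the previous `tf_u` value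
paired with an action of `u`. A `⊤`-edge from another domain `v` appends a pair whose action is in
`v ≠ u`, and non-conflation forbids a filter function from producing such a pair. All other steps
only add observations, which the absorptive concatenation merges as the view requires.
-/

lemma absorb_getLast? {X : Type} (σ : List X) (x : X) : (absorb σ x).getLast? = some x := by
  unfold absorb
  split_ifs with h
  · exact h
  · simp

lemma absorb_eq_self {X : Type} {σ : List X} {x : X} (h : σ.getLast? = some x) :
    absorb σ x = σ :=
  if_pos h

section TfSteps

variable {A D L V : Type} (Arch : ExtArch D L) (dm : A → D) (I : L → List A → A → TFVal A V)

open Classical in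
noncomputable def ownAction (u : D) (t : List (TFVal A V)) : TFVal A V → Option A
  | .pair σ b => if dm b = u ∧ σ = t then some b else none
  | _ => none

lemma tfR_cons_of_dom_eq {u : D} {a : A} (ρ : List A) (ha : dm a = u) :
    tfR Arch dm I (a :: ρ) u = tfR Arch dm I ρ u ++ [.pair (tfR Arch dm I ρ u) a] := by
  subst ha
  simp only [tfR, Arch.refl]

lemma ownAction_pair_tfR {u : D} {a : A} (ρ : List A) (ha : dm a = u) :
    ownAction dm u (tfR Arch dm I ρ u) (.pair (tfR Arch dm I ρ u) a) = some a := by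
  simp [ownAction, ha]

lemma tfR_cons_of_dom_ne (hNC : NonConflating Arch dm I) {u : D} {a : A} (ρ : List A)
    (ha : dm a ≠ u) :
    tfR Arch dm I (a :: ρ) u = tfR Arch dm I ρ u ∨
      ∃ x, ownAction dm u (tfR Arch dm I ρ u) x = none ∧
        tfR Arch dm I (a :: ρ) u = tfR Arch dm I ρ u ++ [x] := by
  rcases hedge : Arch.edge (dm a) u with _ | _ | f
  · left
    simp only [tfR, hedge]
  · right
    refine ⟨.pair (tfR Arch dm I ρ (dm a)) a, ?_, by simp only [tfR, hedge]⟩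
    simp [ownAction, ha]
  · rcases hx : I f ρ.reverse a with _ | v | ⟨σ, b⟩
    · left
      simp only [tfR, hedge, hx, snoc']
    · right
      exact ⟨.base v, rfl, by simp only [tfR, hedge, hx, snoc']⟩
    · right
      refine ⟨.pair σ b, ?_, by simp only [tfR, hedge, hx, snoc']⟩
      have hconf := hNC (dm a) u f hedge a b rfl
      simp only [ownAction, ite_eq_right_iff, reduceCtorEq, imp_false, not_and]
      rintro hb rfl
      exact hconf hb ρ.reverse ρ.reverse (by simp [hx, tf])

end TfSteps

section ViewOfTf

variable {S A D O L V : Type} (M : Machine S A D O) (Arch : ExtArch D L)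
  (I : L → List A → A → TFVal A V) (u : D)

/-- The observation of `u` in any state reached with `tf_u` value `t`. -/
noncomputable def obsOfTf (t : List (TFVal A V)) : O :=
  M.obs u (M.run (Classical.epsilon fun α => tf Arch M.dom I α u = t))

/-- The view of `u` rebuilt from the reverse of a `tf_u` value. -/
noncomputable def viewOfTfR : List (TFVal A V) → List (VE A (({u} : Set D) → O))
  | [] => [.obs fun _ => obsOfTf M Arch I u []]
  | x :: r =>
    let o : VE A (({u} : Set D) → O) := .obs fun _ => obsOfTf M Arch I u (x :: r).reverse
    match ownAction M.dom u r.reverse x with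
    | some b => viewOfTfR r ++ [.act b, o]
    | none => absorb (viewOfTfR r) o

lemma viewOfTfR_getLast? (r : List (TFVal A V)) :
    (viewOfTfR M Arch I u r).getLast? = some (.obs fun _ => obsOfTf M Arch I u r.reverse) := by
  cases r with
  | nil => simp [viewOfTfR]
  | cons x r =>
    unfold viewOfTfR
    split <;> simp [absorb_getLast?]

lemma viewOfTfR_append_singleton {t : List (TFVal A V)} {x : TFVal A V} :
    viewOfTfR M Arch I u (t ++ [x]).reverse =
      match ownAction M.dom u t x with
      | some b =>
        viewOfTfR M Arch I u t.reverse ++ [.act b, .obs fun _ => obsOfTf M Arch I u (t ++ [x])]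
      | none =>
        absorb (viewOfTfR M Arch I u t.reverse) (.obs fun _ => obsOfTf M Arch I u (t ++ [x])) := by
  rw [List.reverse_append, List.reverse_singleton, List.singleton_append, viewOfTfR]
  simp only [List.reverse_cons, List.reverse_reverse]

lemma obs_run_eq_obsOfTf (hFTA : FTACompliant M Arch I) (ρ : List A) :
    (VE.obs fun v : ({u} : Set D) => M.obs v.1 (M.run ρ.reverse) : VE A (({u} : Set D) → O)) =
      .obs fun _ => obsOfTf M Arch I u (tfR Arch M.dom I ρ u) := by
  have hobs : obsOfTf M Arch I u (tf Arch M.dom I ρ.reverse u) = M.obs u (M.run ρ.reverse) :=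
    hFTA u _ _
      (Classical.epsilon_spec (p := fun β => tf Arch M.dom I β u = _) ⟨ρ.reverse, rfl⟩)
  rw [tf, List.reverse_reverse] at hobs
  rw [hobs]
  congr 1
  funext ⟨v, hv⟩
  obtain rfl := Set.mem_singleton_iff.mp hv
  rfl

lemma viewR_eq_viewOfTfR (hNC : NonConflating Arch M.dom I) (hFTA : FTACompliant M Arch I)
    (ρ : List A) : viewR M {u} ρ = viewOfTfR M Arch I u (tfR Arch M.dom I ρ u).reverse := by
  induction ρ with
  | nil =>
    have h₀ := obs_run_eq_obsOfTf M Arch I u hFTA []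
    simpa [viewR, viewOfTfR, tfR, Machine.run] using h₀
  | cons a ρ ih =>
    have hlast := obs_run_eq_obsOfTf M Arch I u hFTA (a :: ρ)
    by_cases ha : M.dom a = u
    · rw [tfR_cons_of_dom_eq Arch M.dom I ρ ha] at hlast ⊢
      rw [viewOfTfR_append_singleton, ownAction_pair_tfR Arch M.dom I ρ ha]
      simp only [viewR, Set.mem_singleton_iff, ha, if_true, ih, hlast]
    · have hview : viewR M {u} (a :: ρ) =
          absorb (viewOfTfR M Arch I u (tfR Arch M.dom I ρ u).reverse)
            (.obs fun _ => obsOfTf M Arch I u (tfR Arch M.dom I (a :: ρ) u)) := by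
        simp only [viewR, Set.mem_singleton_iff, ha, if_false, ih, hlast]
      rcases tfR_cons_of_dom_ne Arch M.dom I hNC ρ ha with hsame | ⟨x, hx, happ⟩
      · rw [hview, hsame]
        apply absorb_eq_self
        simpa using viewOfTfR_getLast? M Arch I u (tfR Arch M.dom I ρ u).reverse
      · rw [hview, happ, viewOfTfR_append_singleton, hx]

end ViewOfTf

/-- FTA-compliance with a non-conflating interpreted architecture
implies that equality of `tf` values yields equality of views. -/
theorem statement7 {S A D O L V : Type} (M : Machine S A D O)
    (Arch : ExtArch D L) (I : L → List A → A → TFVal A V)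
    (hNC : NonConflating Arch M.dom I) (hFTA : FTACompliant M Arch I) :
    ∀ (u : D) (α α' : List A),
      tf Arch M.dom I α u = tf Arch M.dom I α' u →
        view M {u} α = view M {u} α' := by
  intro u α α' htf
  rw [view, view, viewR_eq_viewOfTfR M Arch I u hNC hFTA, viewR_eq_viewOfTfR M Arch I u hNC hFTA]
  exact congrArg (fun t => viewOfTfR M Arch I u t.reverse) htf
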